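/- For any R > 0, there exist infinitely many real-analytic strictly plurisubharmonic functions u on ℂ × D_R of the special form (smae) (with real-analytic coefficients a, d : D_R → ℝ, b, c : D_R → ℂ, a > 0) satisfying det(∂∂̄u) = 1 on ℂ × D_R and such that b_w̄(w) ≠ 0 for every w ∈ D_R (the condition shown in the paper to be equivalent to the induced Kähler metric being nowhere flat). -/

import Mathlib

open Complex
open scoped ComplexOrder

noncomputable section

/-- Wirtinger derivative `F_w = (1/2)(∂F/∂x − i ∂F/∂y)`. -/
def wDeriv (F : ℂ → ℂ) (w : ℂ) : ℂ :=
  (fderiv ℝ F w 1 - Complex.I * fderiv ℝ F w Complex.I) / 2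

/-- Wirtinger derivative `F_w̄ = (1/2)(∂F/∂x + i ∂F/∂y)`. -/
def wBarDeriv (F : ℂ → ℂ) (w : ℂ) : ℂ :=
  (fderiv ℝ F w 1 + Complex.I * fderiv ℝ F w Complex.I) / 2

/-- The mixed second Wirtinger derivative `F_{w̄ w}`. -/
def wBarWDeriv (F : ℂ → ℂ) (w : ℂ) : ℂ := wDeriv (wBarDeriv F) w

/-- `u_z`, the Wirtinger derivative in the first variable. -/
def pzDeriv (u : ℂ × ℂ → ℂ) (p : ℂ × ℂ) : ℂ :=
  (fderiv ℝ u p (1, 0) - Complex.I * fderiv ℝ u p (Complex.I, 0)) / 2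

/-- `u_z̄`, the conjugate Wirtinger derivative in the first variable. -/
def pzBarDeriv (u : ℂ × ℂ → ℂ) (p : ℂ × ℂ) : ℂ :=
  (fderiv ℝ u p (1, 0) + Complex.I * fderiv ℝ u p (Complex.I, 0)) / 2

/-- `u_w`, the Wirtinger derivative in the second variable. -/
def pwDeriv (u : ℂ × ℂ → ℂ) (p : ℂ × ℂ) : ℂ :=
  (fderiv ℝ u p (0, 1) - Complex.I * fderiv ℝ u p (0, Complex.I)) / 2

/-- `u_w̄`, the conjugate Wirtinger derivative in the second variable. -/
def pwBarDeriv (u : ℂ × ℂ → ℂ) (p : ℂ × ℂ) : ℂ :=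
  (fderiv ℝ u p (0, 1) + Complex.I * fderiv ℝ u p (0, Complex.I)) / 2

/-- The complex Hessian `[[u_{z z̄}, u_{z w̄}], [u_{w z̄}, u_{w w̄}]]` of a real-valued
function on `ℂ × ℂ`. -/
def complexHessian (u : ℂ × ℂ → ℝ) (p : ℂ × ℂ) : Matrix (Fin 2) (Fin 2) ℂ :=
  !![pzDeriv (pzBarDeriv fun q => (u q : ℂ)) p, pzDeriv (pwBarDeriv fun q => (u q : ℂ)) p;
     pwDeriv (pzBarDeriv fun q => (u q : ℂ)) p, pwDeriv (pwBarDeriv fun q => (u q : ℂ)) p]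

/-- `det (∂ ∂̄ u) = u_{z z̄} u_{w w̄} − u_{z w̄} u_{w z̄}`. -/
def MAdet (u : ℂ × ℂ → ℝ) (p : ℂ × ℂ) : ℂ := (complexHessian u p).det

/-- `u` is strictly plurisubharmonic at `p` iff its complex Hessian is positive definite. -/
def StrictPSHAt (u : ℂ × ℂ → ℝ) (p : ℂ × ℂ) : Prop := (complexHessian u p).PosDef

/-- The special quadric form (smae):
`u(z,w) = a(w)|z|² + b(w)z² + conj(b(w)z²) + c(w)z + conj(c(w)z) + d(w)`. -/
def smae (a d : ℂ → ℝ) (b c : ℂ → ℂ) : ℂ × ℂ → ℝ := fun p =>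
  a p.2 * Complex.normSq p.1 + (b p.2 * p.1 ^ 2 + (starRingEnd ℂ) (b p.2 * p.1 ^ 2)
    + c p.2 * p.1 + (starRingEnd ℂ) (c p.2 * p.1)).re + d p.2

/-- The system (ma0) on a set `D ⊆ ℂ`:
`a a_{w̄w} = |a_w|² + 4|b_w̄|²`, `a b_{w̄w} = 2 a_w b_w̄`,
`a c_{w̄w} = a_w c_w̄ + 2 b_w̄ conj(c_w)`, `a d_{w̄w} = |c_w̄|² + 1`. -/
def ma0sys (a d : ℂ → ℝ) (b c : ℂ → ℂ) (D : Set ℂ) : Prop :=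
  ∀ w ∈ D,
    (a w : ℂ) * wBarWDeriv (fun v => (a v : ℂ)) w
        = (Complex.normSq (wDeriv (fun v => (a v : ℂ)) w) : ℂ)
          + 4 * (Complex.normSq (wBarDeriv b w) : ℂ) ∧
    (a w : ℂ) * wBarWDeriv b w = 2 * wDeriv (fun v => (a v : ℂ)) w * wBarDeriv b w ∧
    (a w : ℂ) * wBarWDeriv c w
        = wDeriv (fun v => (a v : ℂ)) w * wBarDeriv c w
          + 2 * wBarDeriv b w * (starRingEnd ℂ) (wDeriv c w) ∧
    (a w : ℂ) * wBarWDeriv (fun v => (d v : ℂ)) w = (Complex.normSq (wBarDeriv c w) : ℂ) + 1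


namespace Stmt3Proof

def Tf (A : ℝ) (w : ℂ) : ℝ := A + w.re

def Uf (A : ℝ) (p : ℂ × ℂ) : ℝ :=
  2 * (p.1.re * p.1.re) * (Tf A p.2)⁻¹ + 2/3 * (Tf A p.2 * (Tf A p.2 * Tf A p.2))

def aF (A : ℝ) (w : ℂ) : ℝ := (Tf A w)⁻¹
def bF (A : ℝ) (w : ℂ) : ℂ := (((Tf A w)⁻¹ * 2⁻¹ : ℝ) : ℂ)
def cF : ℂ → ℂ := fun _ => 0
def dF (A : ℝ) (w : ℂ) : ℝ := 2/3 * (Tf A w * (Tf A w * Tf A w))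

def L1 : ℂ × ℂ →L[ℝ] ℝ := Complex.reCLM.comp (ContinuousLinearMap.fst ℝ ℂ ℂ)
def L2 : ℂ × ℂ →L[ℝ] ℝ := Complex.reCLM.comp (ContinuousLinearMap.snd ℝ ℂ ℂ)

lemma hx (p : ℂ × ℂ) : HasFDerivAt (fun q : ℂ × ℂ => q.1.re) L1 p := L1.hasFDerivAt

lemma hT (A : ℝ) (p : ℂ × ℂ) : HasFDerivAt (fun q : ℂ × ℂ => Tf A q.2) L2 p := by
  exact ((hasFDerivAt_const A p).add (L2.hasFDerivAt (x := p))).congr_fderiv (zero_add _)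

lemma hTinv (A : ℝ) (p : ℂ × ℂ) (h0 : Tf A p.2 ≠ 0) :
    HasFDerivAt (fun q : ℂ × ℂ => (Tf A q.2)⁻¹)
      (((1 : ℝ →L[ℝ] ℝ).smulRight (-(Tf A p.2 ^ 2)⁻¹)).comp L2) p :=
  (hasFDerivAt_inv h0).comp p (hT A p)

lemma hTTinv (A : ℝ) (p : ℂ × ℂ) (h0 : Tf A p.2 ≠ 0) :
    HasFDerivAt (fun q : ℂ × ℂ => (Tf A q.2 * Tf A q.2)⁻¹)
      ((((1 : ℝ →L[ℝ] ℝ).smulRight (-((Tf A p.2 * Tf A p.2) ^ 2)⁻¹)).comp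
        (Tf A p.2 • L2 + Tf A p.2 • L2))) p :=
  (hasFDerivAt_inv (mul_ne_zero h0 h0)).comp p ((hT A p).mul (hT A p))

/-- first derivative in `z̄` -/
def g1 (A : ℝ) (q : ℂ × ℂ) : ℂ := ((2 * q.1.re * (Tf A q.2)⁻¹ : ℝ) : ℂ)

/-- first derivative in `w̄` -/
def g2 (A : ℝ) (q : ℂ × ℂ) : ℂ :=
  ((q.1.re * q.1.re * (-(Tf A q.2 * Tf A q.2)⁻¹) + Tf A q.2 * Tf A q.2 : ℝ) : ℂ)

lemma pzBar_eq (A : ℝ) : ∀ q : ℂ × ℂ, Tf A q.2 ≠ 0 →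
    pzBarDeriv (fun q => (Uf A q : ℂ)) q = g1 A q := by
  intro p h0
  have h := ((((hx p).mul (hx p)).const_mul 2).mul (hTinv A p h0)).add
    (((hT A p).mul ((hT A p).mul (hT A p))).const_mul (2/3))
  have hC : HasFDerivAt (fun q : ℂ × ℂ => ((Uf A q : ℝ) : ℂ)) _ p :=
    (Complex.ofRealCLM.hasFDerivAt (x := Uf A p)).comp p h
  rw [pzBarDeriv, hC.fderiv]
  simp [L1, L2, g1]
  ring

lemma pwBar_eq (A : ℝ) : ∀ q : ℂ × ℂ, Tf A q.2 ≠ 0 →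
    pwBarDeriv (fun q => (Uf A q : ℂ)) q = g2 A q := by
  intro p h0
  have h := ((((hx p).mul (hx p)).const_mul 2).mul (hTinv A p h0)).add
    (((hT A p).mul ((hT A p).mul (hT A p))).const_mul (2/3))
  have hC : HasFDerivAt (fun q : ℂ × ℂ => ((Uf A q : ℝ) : ℂ)) _ p :=
    (Complex.ofRealCLM.hasFDerivAt (x := Uf A p)).comp p h
  rw [pwBarDeriv, hC.fderiv]
  simp [L1, L2, g2]
  field_simp
  ring

lemma isOpen_T (A : ℝ) : IsOpen {q : ℂ × ℂ | Tf A q.2 ≠ 0} := by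
  have : Continuous fun q : ℂ × ℂ => Tf A q.2 :=
    continuous_const.add (Complex.continuous_re.comp continuous_snd)
  exact isOpen_compl_singleton.preimage this

lemma fderiv_pzBar (A : ℝ) (p : ℂ × ℂ) (h0 : Tf A p.2 ≠ 0) :
    fderiv ℝ (pzBarDeriv (fun q => (Uf A q : ℂ))) p = fderiv ℝ (g1 A) p := by
  apply Filter.EventuallyEq.fderiv_eq
  filter_upwards [(isOpen_T A).mem_nhds h0] with q hq
  exact pzBar_eq A q hq

lemma fderiv_pwBar (A : ℝ) (p : ℂ × ℂ) (h0 : Tf A p.2 ≠ 0) :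
    fderiv ℝ (pwBarDeriv (fun q => (Uf A q : ℂ))) p = fderiv ℝ (g2 A) p := by
  apply Filter.EventuallyEq.fderiv_eq
  filter_upwards [(isOpen_T A).mem_nhds h0] with q hq
  exact pwBar_eq A q hq

lemma hessian_eq (A : ℝ) (p : ℂ × ℂ) (h0 : Tf A p.2 ≠ 0) :
    complexHessian (Uf A) p
      = !![(((Tf A p.2)⁻¹ : ℝ) : ℂ), ((-(p.1.re * (Tf A p.2 * Tf A p.2)⁻¹) : ℝ) : ℂ);
           ((-(p.1.re * (Tf A p.2 * Tf A p.2)⁻¹) : ℝ) : ℂ),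
           ((p.1.re * p.1.re * (Tf A p.2 * (Tf A p.2 * Tf A p.2))⁻¹ + Tf A p.2 : ℝ) : ℂ)] := by
  have hg1 := (((hx p).const_mul 2).mul (hTinv A p h0))
  have hg1C : HasFDerivAt (g1 A) _ p :=
    (Complex.ofRealCLM.hasFDerivAt (x := (2 * p.1.re * (Tf A p.2)⁻¹ : ℝ))).comp p hg1
  have hg2 := ((((hx p).mul (hx p)).mul ((hTTinv A p h0).neg)).add ((hT A p).mul (hT A p)))
  have hg2C : HasFDerivAt (g2 A) _ p :=
    (Complex.ofRealCLM.hasFDerivAt).comp p hg2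
  have h0' : ((Tf A p.2 : ℝ) : ℂ) ≠ 0 := by exact_mod_cast h0
  have e11 : pzDeriv (pzBarDeriv fun q => ((Uf A q : ℝ) : ℂ)) p = (((Tf A p.2)⁻¹ : ℝ) : ℂ) := by
    rw [pzDeriv, fderiv_pzBar A p h0, hg1C.fderiv]
    simp [L1, L2]
    try push_cast
    try field_simp
    try ring
  have e21 : pwDeriv (pzBarDeriv fun q => ((Uf A q : ℝ) : ℂ)) p
      = ((-(p.1.re * (Tf A p.2 * Tf A p.2)⁻¹) : ℝ) : ℂ) := by
    rw [pwDeriv, fderiv_pzBar A p h0, hg1C.fderiv]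
    simp [L1, L2]
    try push_cast
    try field_simp
    try ring
  have e12 : pzDeriv (pwBarDeriv fun q => ((Uf A q : ℝ) : ℂ)) p
      = ((-(p.1.re * (Tf A p.2 * Tf A p.2)⁻¹) : ℝ) : ℂ) := by
    rw [pzDeriv, fderiv_pwBar A p h0, hg2C.fderiv]
    simp [L1, L2]
    try push_cast
    try field_simp
    try ring
  have e22 : pwDeriv (pwBarDeriv fun q => ((Uf A q : ℝ) : ℂ)) p
      = ((p.1.re * p.1.re * (Tf A p.2 * (Tf A p.2 * Tf A p.2))⁻¹ + Tf A p.2 : ℝ) : ℂ) := by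
    rw [pwDeriv, fderiv_pwBar A p h0, hg2C.fderiv]
    simp [L1, L2]
    try push_cast
    try field_simp
    try ring
  rw [complexHessian, e11, e12, e21, e22]

lemma posdef_matrix (T x : ℝ) (hT : 0 < T) :
    (!![((T⁻¹ : ℝ) : ℂ), ((-(x*(T*T)⁻¹) : ℝ) : ℂ);
       ((-(x*(T*T)⁻¹) : ℝ) : ℂ), ((x*x*(T*(T*T))⁻¹ + T : ℝ) : ℂ)]).PosDef := by
  rw [Matrix.posDef_iff_dotProduct_mulVec]
  constructor
  · ext i j
    fin_cases i <;> fin_cases j <;>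
      simp [Matrix.conjTranspose_apply, Complex.conj_ofReal]
  · intro v hv
    have key : dotProduct (star v)
        ((!![((T⁻¹ : ℝ) : ℂ), ((-(x*(T*T)⁻¹) : ℝ) : ℂ);
       ((-(x*(T*T)⁻¹) : ℝ) : ℂ), ((x*x*(T*(T*T))⁻¹ + T : ℝ) : ℂ)]).mulVec v)
        = ((T⁻¹ * Complex.normSq (v 0 - ((x*T⁻¹ : ℝ) : ℂ) * v 1)
            + T * Complex.normSq (v 1) : ℝ) : ℂ) := by
      simp [Matrix.mulVec, dotProduct, Fin.sum_univ_two, Complex.ext_iff,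
        Complex.normSq_apply, mul_inv]
      constructor <;> ring
    rw [key]
    rw [Complex.zero_lt_real]
    have h1 : v 1 ≠ 0 ∨ (v 1 = 0 ∧ v 0 ≠ 0) := by
      by_cases h : v 1 = 0
      · refine Or.inr ⟨h, fun h0 => hv ?_⟩
        funext i; fin_cases i <;> assumption
      · exact Or.inl h
    have hTi : 0 < T⁻¹ := inv_pos.mpr hT
    rcases h1 with h | ⟨h, h0⟩
    · have := Complex.normSq_pos.mpr h
      have := Complex.normSq_nonneg (v 0 - ((x*T⁻¹ : ℝ) : ℂ) * v 1)
      positivity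
    · have hvv : v 0 - ((x*T⁻¹ : ℝ) : ℂ) * v 1 = v 0 := by rw [h]; ring
      rw [hvv]
      have := Complex.normSq_pos.mpr h0
      have := Complex.normSq_nonneg (v 1)
      positivity

lemma det_matrix (T x : ℝ) (hT : T ≠ 0) :
    (!![((T⁻¹ : ℝ) : ℂ), ((-(x*(T*T)⁻¹) : ℝ) : ℂ);
       ((-(x*(T*T)⁻¹) : ℝ) : ℂ), ((x*x*(T*(T*T))⁻¹ + T : ℝ) : ℂ)]).det = 1 := by
  rw [Matrix.det_fin_two_of]
  have : ((T : ℝ) : ℂ) ≠ 0 := by exact_mod_cast hT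
  push_cast
  field_simp
  ring

lemma smae_eq (A : ℝ) : smae (aF A) (dF A) (bF A) cF = Uf A := by
  funext p
  simp [smae, aF, bF, cF, dF, Uf, Complex.normSq_apply, Complex.add_re, Complex.mul_re,
    Complex.conj_re, pow_two, Complex.ofReal_re, Complex.ofReal_im, Complex.mul_im]
  ring

lemma an_T (A : ℝ) (w : ℂ) : AnalyticAt ℝ (fun w : ℂ => Tf A w) w :=
  analyticAt_const.add (Complex.reCLM.analyticAt w)

lemma an_aF (A : ℝ) (w : ℂ) (h0 : Tf A w ≠ 0) : AnalyticAt ℝ (aF A) w :=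
  (an_T A w).inv h0

lemma an_bF (A : ℝ) (w : ℂ) (h0 : Tf A w ≠ 0) : AnalyticAt ℝ (bF A) w :=
  (Complex.ofRealCLM.analyticAt _).comp (((an_T A w).inv h0).mul analyticAt_const)

lemma an_dF (A : ℝ) (w : ℂ) : AnalyticAt ℝ (dF A) w :=
  analyticAt_const.mul ((an_T A w).mul ((an_T A w).mul (an_T A w)))

lemma an_Uf (A : ℝ) (p : ℂ × ℂ) (h0 : Tf A p.2 ≠ 0) : AnalyticAt ℝ (Uf A) p := by
  have hx : AnalyticAt ℝ (fun q : ℂ × ℂ => q.1.re) p :=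
    (Complex.reCLM.comp (ContinuousLinearMap.fst ℝ ℂ ℂ)).analyticAt p
  have hT : AnalyticAt ℝ (fun q : ℂ × ℂ => Tf A q.2) p :=
    analyticAt_const.add ((Complex.reCLM.comp (ContinuousLinearMap.snd ℝ ℂ ℂ)).analyticAt p)
  exact ((analyticAt_const.mul (hx.mul hx)).mul (hT.inv h0)).add
    (analyticAt_const.mul (hT.mul (hT.mul hT)))

lemma hTw (A : ℝ) (w : ℂ) : HasFDerivAt (fun w : ℂ => Tf A w) Complex.reCLM w := by
  exact ((hasFDerivAt_const A w).add (Complex.reCLM.hasFDerivAt (x := w))).congr_fderiv (zero_add _)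

lemma wBar_bF (A : ℝ) (w : ℂ) (h0 : Tf A w ≠ 0) :
    wBarDeriv (bF A) w = ((-(Tf A w ^ 2)⁻¹ * 2⁻¹ / 2 : ℝ) : ℂ) := by
  have h := (((hasFDerivAt_inv h0).comp w (hTw A w)).mul_const (2⁻¹ : ℝ))
  have hC : HasFDerivAt (bF A) _ w := (Complex.ofRealCLM.hasFDerivAt).comp w h
  rw [wBarDeriv, hC.fderiv]
  simp
  push_cast
  ring

lemma wBar_bF_ne (A : ℝ) (w : ℂ) (h0 : Tf A w ≠ 0) : wBarDeriv (bF A) w ≠ 0 := by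
  rw [wBar_bF A w h0]
  simp [pow_eq_zero_iff, h0]

lemma smae_zero (A : ℝ) : smae (aF A) (dF A) (bF A) cF (0, 0) = 2/3 * (A * (A * A)) := by
  simp [smae_eq, Uf, Tf]

end Stmt3Proof

/-- for each `R > 0` there are infinitely many real-analytic strictly
plurisubharmonic solutions of `det(∂∂̄u) = 1` on `ℂ × D_R` of the form (smae) with
`b_w̄` nowhere zero on `D_R` (so the induced Kähler metric is nowhere flat). -/
theorem stmt3 (R : ℝ) (hR : 0 < R) :
    { v : ↥((Set.univ ×ˢ Metric.ball (0 : ℂ) R : Set (ℂ × ℂ))) → ℝ |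
      ∃ (a d : ℂ → ℝ) (b c : ℂ → ℂ),
        AnalyticOnNhd ℝ a (Metric.ball (0 : ℂ) R) ∧
        AnalyticOnNhd ℝ d (Metric.ball (0 : ℂ) R) ∧
        AnalyticOnNhd ℝ b (Metric.ball (0 : ℂ) R) ∧
        AnalyticOnNhd ℝ c (Metric.ball (0 : ℂ) R) ∧
        (∀ w ∈ Metric.ball (0 : ℂ) R, 0 < a w) ∧
        AnalyticOnNhd ℝ (smae a d b c) (Set.univ ×ˢ Metric.ball (0 : ℂ) R) ∧
        (∀ p ∈ (Set.univ ×ˢ Metric.ball (0 : ℂ) R : Set (ℂ × ℂ)),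
          StrictPSHAt (smae a d b c) p ∧ MAdet (smae a d b c) p = 1) ∧
        (∀ w ∈ Metric.ball (0 : ℂ) R, wBarDeriv b w ≠ 0) ∧
        v = fun p => smae a d b c p.val }.Infinite := by
  classical
  set S : Set (ℂ × ℂ) := (Set.univ ×ˢ Metric.ball (0 : ℂ) R)
  have h00 : ((0 : ℂ), (0 : ℂ)) ∈ S :=
    ⟨trivial, Metric.mem_ball_self hR⟩
  set F : ℕ → (↥S → ℝ) := fun n =>
    fun p => smae (Stmt3Proof.aF (R + 1 + n)) (Stmt3Proof.dF (R + 1 + n))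
      (Stmt3Proof.bF (R + 1 + n)) Stmt3Proof.cF p.val with hF
  have hTpos : ∀ (n : ℕ) (w : ℂ), w ∈ Metric.ball (0 : ℂ) R →
      0 < Stmt3Proof.Tf (R + 1 + n) w := by
    intro n w hw
    have hw' : ‖w‖ < R := by simpa [Complex.dist_eq] using hw
    have h1 : |w.re| ≤ ‖w‖ := Complex.abs_re_le_norm w
    have h2 : (0 : ℝ) ≤ n := Nat.cast_nonneg n
    have := abs_lt.mp (lt_of_le_of_lt h1 hw')
    simp only [Stmt3Proof.Tf]
    linarith
  refine Set.infinite_of_injective_forall_mem (f := F) ?_ ?_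
  · -- injectivity
    intro m n h
    have hmem := h00
    have := congrFun h ⟨((0 : ℂ), (0 : ℂ)), hmem⟩
    simp only [hF, Stmt3Proof.smae_zero] at this
    set a : ℝ := R + 1 + m with ha
    set b : ℝ := R + 1 + n with hb
    clear_value a b
    have hA : a = b := by
      have ha0 : 0 < a := by rw [ha]; positivity
      have hb0 : 0 < b := by rw [hb]; positivity
      rcases lt_trichotomy a b with hlt | heq | hgt
      · exfalso
        have hq : 0 < a * a + a * b + b * b := by
          nlinarith [mul_pos ha0 ha0, mul_pos ha0 hb0, mul_pos hb0 hb0]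
        have h3 : 0 < (b - a) * (a * a + a * b + b * b) :=
          mul_pos (by linarith) hq
        nlinarith [h3]
      · exact heq
      · exfalso
        have hq : 0 < a * a + a * b + b * b := by
          nlinarith [mul_pos ha0 ha0, mul_pos ha0 hb0, mul_pos hb0 hb0]
        have h3 : 0 < (a - b) * (a * a + a * b + b * b) :=
          mul_pos (by linarith) hq
        nlinarith [h3]
    have : (m : ℝ) = (n : ℝ) := by
      rw [ha, hb] at hA; linarith
    exact_mod_cast this
  · -- membership
    intro n
    refine ⟨Stmt3Proof.aF (R + 1 + n), Stmt3Proof.dF (R + 1 + n),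
      Stmt3Proof.bF (R + 1 + n), Stmt3Proof.cF, ?_, ?_, ?_, ?_, ?_, ?_, ?_, ?_, rfl⟩
    · exact fun w hw => Stmt3Proof.an_aF _ w (ne_of_gt (hTpos n w hw))
    · exact fun w hw => Stmt3Proof.an_dF _ w
    · exact fun w hw => Stmt3Proof.an_bF _ w (ne_of_gt (hTpos n w hw))
    · exact fun w hw => analyticAt_const
    · intro w hw
      exact inv_pos.mpr (hTpos n w hw)
    · rw [Stmt3Proof.smae_eq]
      intro p hp
      exact Stmt3Proof.an_Uf _ p (ne_of_gt (hTpos n p.2 hp.2))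
    · intro p hp
      have h0 : 0 < Stmt3Proof.Tf (R + 1 + n) p.2 := hTpos n p.2 hp.2
      have h0' : Stmt3Proof.Tf (R + 1 + n) p.2 ≠ 0 := ne_of_gt h0
      constructor
      · rw [StrictPSHAt, Stmt3Proof.smae_eq, Stmt3Proof.hessian_eq _ p h0']
        have := Stmt3Proof.posdef_matrix (Stmt3Proof.Tf (R + 1 + n) p.2) p.1.re h0
        convert this using 2 <;> push_cast <;> ring
      · rw [MAdet, Stmt3Proof.smae_eq, Stmt3Proof.hessian_eq _ p h0']
        have := Stmt3Proof.det_matrix (Stmt3Proof.Tf (R + 1 + n) p.2) p.1.re h0'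
        convert this using 3 <;> push_cast <;> ring
    · intro w hw
      exact Stmt3Proof.wBar_bF_ne _ w (ne_of_gt (hTpos n w hw))
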